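/- Let (Q,+) be an NK-loop and let φ, μ be special endomorphisms of (Q,+) such that 2z + φ(z) ∈ N(Q,+) and 2z + μ(z) ∈ N(Q,+) for all z ∈ Q, φ∘μ = μ∘φ, and φ(x) + (μ(x) + φ(μ(x))) = 0 for all x ∈ Q. Define f, h : Q → Q by f(z) = z + φ(z) and h(z) = z + μ(z) for all z ∈ Q. Then f∘h = id_Q = h∘f; in particular f is an automorphism of (Q,+) with inverse h. -/
import Mathlib


/- Preamble: NK-loops, written additively.
   A loop is a set with `+`, a neutral element `0`, and unique left/right
   solvability.  An NK-loop is a loop in which every element decomposes as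
   `x = u + v = v + u` with `u` in the nucleus and `v` in the Moufang center.
   Every NK-loop is a diassociative Moufang loop, so every element has a
   (uniquely determined) two-sided inverse `-x`, which we include in the
   structure. -/

universe u

section Preamble
variable {Q : Type u}

/-- `a` belongs to the nucleus `N(Q,+)`. -/
def inNucleus [Add Q] (a : Q) : Prop :=
  ∀ x y : Q, (a + x) + y = a + (x + y) ∧ (x + a) + y = x + (a + y) ∧
    (x + y) + a = x + (y + a)

/-- `a` belongs to the Moufang center `K(Q,+)`. -/
def inMoufangCenter [Add Q] (a : Q) : Prop :=
  ∀ x y : Q, (a + a) + (x + y) = (a + x) + (a + y)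

/-- `a` belongs to the center `Z(Q,+) = N(Q,+) ∩ K(Q,+)`. -/
def inCenter [Add Q] (a : Q) : Prop := inNucleus a ∧ inMoufangCenter a

/-- An NK-loop `(Q,+)`: a loop in which every element decomposes as a sum
    `x = u + v = v + u` with `u ∈ N(Q,+)` and `v ∈ K(Q,+)`. -/
class NKLoop (Q : Type u) extends Add Q, Zero Q, Neg Q where
  zero_add : ∀ x : Q, 0 + x = x
  add_zero : ∀ x : Q, x + 0 = x
  exu_left : ∀ a b : Q, ∃! x : Q, a + x = b
  exu_right : ∀ a b : Q, ∃! y : Q, y + a = b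
  neg_add_cancel : ∀ x : Q, -x + x = 0
  add_neg_cancel : ∀ x : Q, x + -x = 0
  nk_decomp : ∀ x : Q, ∃ u v : Q, inNucleus u ∧ inMoufangCenter v ∧
      x = u + v ∧ x = v + u

variable [Add Q] [Zero Q] [Neg Q]

/-- Natural multiple `n • x`. -/
def nsmulL : ℕ → Q → Q
  | 0, _ => 0
  | n + 1, x => x + nsmulL n x

/-- Integer multiple `m • x` (unambiguous by diassociativity). -/
def zsmulL : ℤ → Q → Q
  | Int.ofNat n, x => nsmulL n x
  | Int.negSucc n, x => -(nsmulL (n + 1) x)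

/-- `f` is an endomorphism of `(Q,+)`. -/
def IsEndo (f : Q → Q) : Prop := ∀ x y : Q, f (x + y) = f x + f y

/-- `a` belongs to the center of the (commutative) subloop `(K(Q,+),+)`:
    `a ∈ K(Q,+)` and `a` satisfies the nucleus conditions relative to
    elements of `K(Q,+)`. -/
def inCenterOfK (a : Q) : Prop :=
  inMoufangCenter a ∧ ∀ x y : Q, inMoufangCenter x → inMoufangCenter y →
    (a + x) + y = a + (x + y) ∧ (x + a) + y = x + (a + y) ∧
      (x + y) + a = x + (y + a)

/-- `f` is a special endomorphism of the NK-loop `(Q,+)`: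
    `f(Q) ⊆ K(Q,+)`, the restriction of `f` to `K(Q,+)` is a quasicentral
    endomorphism of the (commutative) loop `(K(Q,+),+)`, and
    `f(N(Q,+)) ⊆ N(Q,+)`. -/
def IsSpecial (f : Q → Q) : Prop :=
  IsEndo f ∧ (∀ x : Q, inMoufangCenter (f x)) ∧
  (∃ m : ℤ, ∀ x : Q, inMoufangCenter x → inCenterOfK (zsmulL m x + f x)) ∧
  (∀ x : Q, inNucleus x → inNucleus (f x))

/-- `f` satisfies condition (F): `-x + f(x) ∈ K(Q,+)` and
    `x + f(x) ∈ N(Q,+)` for all `x`. -/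
def SatisfiesF (f : Q → Q) : Prop :=
  ∀ x : Q, inMoufangCenter (-x + f x) ∧ inNucleus (x + f x)

end Preamble

/- STATEMENT 16: Let `φ, μ` be special endomorphisms of an NK-loop with
   `2z + φ(z) ∈ N(Q,+)` and `2z + μ(z) ∈ N(Q,+)` for all `z`,
   `φ ∘ μ = μ ∘ φ`, and `φ(x) + (μ(x) + φ(μ(x))) = 0` for all `x`.  If
   `f(z) = z + φ(z)` and `h(z) = z + μ(z)`, then `f ∘ h = id = h ∘ f`; in
   particular `f` is an automorphism of `(Q,+)` with inverse `h`. -/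
section Proof
variable {Q : Type u} [NKLoop Q]

private lemma zadd (x : Q) : 0 + x = x := NKLoop.zero_add x
private lemma addz (x : Q) : x + 0 = x := NKLoop.add_zero x
private lemma negadd (x : Q) : -x + x = 0 := NKLoop.neg_add_cancel x
private lemma addneg (x : Q) : x + -x = 0 := NKLoop.add_neg_cancel x

private lemma lcancel {a x y : Q} (h : a + x = a + y) : x = y := by
  obtain ⟨w, -, hw⟩ := NKLoop.exu_left a (a + y)
  rw [hw x h, hw y rfl]

private lemma rcancel {a x y : Q} (h : x + a = y + a) : x = y := by
  obtain ⟨w, -, hw⟩ := NKLoop.exu_right a (y + a)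
  rw [hw x h, hw y rfl]

private lemma eq_neg_of_add_right {x y : Q} (h : x + y = 0) : y = -x :=
  lcancel (h.trans (addneg x).symm)

private lemma negneg (x : Q) : -(-x) = x := (eq_neg_of_add_right (negadd x)).symm

private lemma negz : -(0 : Q) = 0 := (eq_neg_of_add_right (zadd 0)).symm

private lemma nuc1 {a : Q} (h : inNucleus a) (x y : Q) :
    (a + x) + y = a + (x + y) := (h x y).1
private lemma nuc2 {a : Q} (h : inNucleus a) (x y : Q) :
    (x + a) + y = x + (a + y) := (h x y).2.1
private lemma nuc3 {a : Q} (h : inNucleus a) (x y : Q) :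
    (x + y) + a = x + (y + a) := (h x y).2.2

private lemma nuc_zero : inNucleus (0 : Q) := by
  intro x y
  refine ⟨?_, ?_, ?_⟩
  · rw [zadd, zadd]
  · rw [addz, zadd]
  · rw [addz, addz]

private lemma nuc_add {a b : Q} (ha : inNucleus a) (hb : inNucleus b) :
    inNucleus (a + b) := by
  intro x y
  refine ⟨?_, ?_, ?_⟩
  · calc ((a + b) + x) + y = (a + (b + x)) + y := by rw [nuc1 ha]
      _ = a + ((b + x) + y) := nuc1 ha _ _
      _ = a + (b + (x + y)) := by rw [nuc1 hb]
      _ = (a + b) + (x + y) := (nuc1 ha _ _).symm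
  · calc (x + (a + b)) + y = ((x + a) + b) + y := by rw [nuc2 ha]
      _ = (x + a) + (b + y) := nuc2 hb _ _
      _ = x + (a + (b + y)) := nuc2 ha _ _
      _ = x + ((a + b) + y) := by rw [nuc1 ha]
  · calc (x + y) + (a + b) = ((x + y) + a) + b := (nuc2 ha _ _).symm
      _ = (x + (y + a)) + b := by rw [nuc3 ha]
      _ = x + ((y + a) + b) := nuc3 hb _ _
      _ = x + (y + (a + b)) := by rw [nuc2 ha]

private lemma nuc_neg {a : Q} (ha : inNucleus a) : inNucleus (-a) := by
  have hxa : ∀ x : Q, (x + -a) + a = x := by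
    intro x
    rw [nuc3 ha, negadd, addz]
  have hax : ∀ x : Q, a + (-a + x) = x := by
    intro x
    rw [← nuc1 ha, addneg, zadd]
  intro x y
  refine ⟨?_, ?_, ?_⟩
  · apply lcancel (a := a)
    calc a + ((-a + x) + y) = (a + (-a + x)) + y := (nuc1 ha _ _).symm
      _ = x + y := by rw [hax]
      _ = a + (-a + (x + y)) := (hax _).symm
  · calc (x + -a) + y = (x + -a) + ((a + (-a + y))) := by rw [hax]
      _ = ((x + -a) + a) + (-a + y) := (nuc2 ha _ _).symm
      _ = x + (-a + y) := by rw [hxa]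
  · calc (x + y) + -a = (x + ((y + -a) + a)) + -a := by rw [hxa y]
      _ = ((x + (y + -a)) + a) + -a := by rw [nuc3 ha x (y + -a)]
      _ = (x + (y + -a)) + (a + -a) := nuc2 ha _ _
      _ = x + (y + -a) := by rw [addneg, addz]

/- Moufang-center facts -/

private lemma ksq {k : Q} (hk : inMoufangCenter k) (t : Q) :
    (k + k) + t = k + (k + t) := by
  have := hk 0 t
  rwa [zadd, addz] at this

private lemma kcomm {k : Q} (hk : inMoufangCenter k) (t : Q) : k + t = t + k := by
  obtain ⟨x, hx, -⟩ := NKLoop.exu_left k t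
  have h1 := hk x 0
  rw [addz, addz] at h1
  have h2 := ksq hk x
  rw [hx] at h1 h2
  exact h2.symm.trans h1

private lemma klip0 {k : Q} (hk : inMoufangCenter k) (t : Q) : k + (-k + t) = t := by
  have h := hk (-k) t
  rw [addneg, zadd] at h
  have h2 := ksq hk (-k + t)
  have : k + (k + (-k + t)) = k + t := by rw [← h2, h]
  exact lcancel this

private lemma klip' {k : Q} (hk : inMoufangCenter k) (t : Q) : -k + (k + t) = t := by
  apply lcancel (a := k)
  rw [klip0 hk (k + t)]

private lemma kneg {k : Q} (hk : inMoufangCenter k) : inMoufangCenter (-k) := by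
  intro x y
  apply lcancel (a := k + k)
  have h1 : (k + k) + ((-k + -k) + (x + y)) = x + y := by
    rw [hk (-k + -k) (x + y)]
    have : k + (-k + -k) = -k := klip0 hk (-k)
    rw [this, klip' hk]
  have h2 : (k + k) + ((-k + x) + (-k + y)) = x + y := by
    rw [hk (-k + x) (-k + y), klip0 hk, klip0 hk]
  rw [h1, h2]

/- Center facts -/

private lemma cen_comm {w : Q} (hw : inCenter w) (t : Q) : w + t = t + w :=
  kcomm hw.2 t

private lemma cen_zero : inCenter (0 : Q) := by
  refine ⟨nuc_zero, ?_⟩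
  intro x y
  simp only [zadd]

private lemma cen_add {w w' : Q} (hw : inCenter w) (hw' : inCenter w') :
    inCenter (w + w') := by
  have hN : inNucleus (w + w') := nuc_add hw.1 hw'.1
  refine ⟨hN, ?_⟩
  have hc : ∀ t : Q, (w + w') + t = t + (w + w') := by
    intro t
    calc (w + w') + t = w + (w' + t) := nuc1 hw.1 _ _
      _ = w + (t + w') := by rw [cen_comm hw' t]
      _ = (w + t) + w' := (nuc1 hw.1 _ _).symm
      _ = (t + w) + w' := by rw [cen_comm hw t]
      _ = t + (w + w') := nuc2 hw.1 _ _
  intro x y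
  set W := w + w' with hW
  calc (W + W) + (x + y) = W + (W + (x + y)) := nuc1 hN _ _
    _ = W + ((x + y) + W) := by rw [hc (x + y)]
    _ = W + (x + (y + W)) := by rw [nuc3 hN]
    _ = W + (x + (W + y)) := by rw [← hc y]
    _ = (W + x) + (W + y) := (nuc1 hN _ _).symm

private lemma cen_neg {w : Q} (hw : inCenter w) : inCenter (-w) :=
  ⟨nuc_neg hw.1, kneg hw.2⟩

/- Elements of the centre of `K` are central in all of `Q`. -/
private lemma centerK_to_center {w : Q} (hw : inCenterOfK w) : inCenter w := by
  have hwK : inMoufangCenter w := hw.1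
  have hcom : ∀ t : Q, w + t = t + w := kcomm hwK
  refine ⟨?_, hwK⟩
  intro x y
  obtain ⟨ux, vx, hux, hvx, hx1, hx2⟩ := NKLoop.nk_decomp x
  obtain ⟨uy, vy, huy, hvy, hy1, hy2⟩ := NKLoop.nk_decomp y
  have hwv3 : (vx + vy) + w = vx + (vy + w) := (hw.2 vx vy hvx hvy).2.2
  have hwv2 : (vx + w) + vy = vx + (w + vy) := by
    have := hw.2 vx vy hvx hvy
    exact this.2.1
  -- x + y in normal form
  have hxy : x + y = (ux + (vx + vy)) + uy := by
    calc x + y = (ux + vx) + (vy + uy) := by rw [hx1, hy2]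
      _ = ((ux + vx) + vy) + uy := (nuc3 huy _ _).symm
      _ = (ux + (vx + vy)) + uy := by rw [nuc1 hux vx vy]
  -- (x+y) + w in normal form
  have hxyw : (x + y) + w = (ux + ((vx + vy) + w)) + uy := by
    calc (x + y) + w = ((ux + (vx + vy)) + uy) + w := by rw [hxy]
      _ = (ux + (vx + vy)) + (uy + w) := nuc2 huy _ _
      _ = (ux + (vx + vy)) + (w + uy) := by rw [← hcom uy]
      _ = ((ux + (vx + vy)) + w) + uy := (nuc3 huy _ _).symm
      _ = (ux + ((vx + vy) + w)) + uy := by rw [nuc1 hux (vx + vy) w]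
  have hIII : (x + y) + w = x + (y + w) := by
    have hyw : y + w = (vy + w) + uy := by
      calc y + w = (vy + uy) + w := by rw [hy2]
        _ = vy + (uy + w) := nuc2 huy _ _
        _ = vy + (w + uy) := by rw [← hcom uy]
        _ = (vy + w) + uy := (nuc3 huy _ _).symm
    calc (x + y) + w = (ux + ((vx + vy) + w)) + uy := hxyw
      _ = (ux + (vx + (vy + w))) + uy := by rw [hwv3]
      _ = ((ux + vx) + (vy + w)) + uy := by rw [nuc1 hux vx (vy + w)]
      _ = (ux + vx) + ((vy + w) + uy) := nuc3 huy _ _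
      _ = x + (y + w) := by rw [← hx1, ← hyw]
  have hI : (w + x) + y = w + (x + y) := by
    have hwx : w + x = ux + (vx + w) := by
      calc w + x = x + w := hcom x
        _ = (ux + vx) + w := by rw [hx1]
        _ = ux + (vx + w) := nuc1 hux _ _
    calc (w + x) + y = (ux + (vx + w)) + (vy + uy) := by rw [hwx, hy2]
      _ = ((ux + (vx + w)) + vy) + uy := (nuc3 huy _ _).symm
      _ = (ux + ((vx + w) + vy)) + uy := by rw [nuc1 hux (vx + w) vy]
      _ = (ux + (vx + (w + vy))) + uy := by rw [hwv2]
      _ = (ux + (vx + (vy + w))) + uy := by rw [hcom vy]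
      _ = (ux + ((vx + vy) + w)) + uy := by rw [hwv3]
      _ = (x + y) + w := hxyw.symm
      _ = w + (x + y) := (hcom _).symm
  refine ⟨hI, ?_, hIII⟩
  calc (x + w) + y = (w + x) + y := by rw [← hcom x]
    _ = w + (x + y) := hI
    _ = (x + y) + w := hcom _
    _ = x + (y + w) := hIII
    _ = x + (w + y) := by rw [← hcom y]

/- Natural and integer multiples of a Moufang-central element. -/

private lemma nsmul_key {v : Q} (hv : inMoufangCenter v) :
    ∀ (n : ℕ) (s : Q), nsmulL n v + s = (v + ·)^[n] s := by
  intro n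
  induction n with
  | zero =>
    intro s
    show (0 : Q) + s = s
    exact zadd s
  | succ n ih =>
    intro s
    obtain ⟨y, hy, -⟩ := NKLoop.exu_left v s
    have : nsmulL (n+1) v + s = (v + ·)^[n+1+1] y := by
      calc nsmulL (n+1) v + s = (v + nsmulL n v) + (v + y) := by rw [hy]; rfl
        _ = (v + v) + (nsmulL n v + y) := (hv (nsmulL n v) y).symm
        _ = v + (v + (nsmulL n v + y)) := ksq hv _
        _ = v + (v + (v + ·)^[n] y) := by rw [ih y]
        _ = (v + ·)^[n+1+1] y := by
              rw [Function.iterate_succ_apply' (v + ·) (n+1) y,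
                Function.iterate_succ_apply' (v + ·) n y]
    rw [this, ← hy]
    exact (Function.iterate_succ_apply (v + ·) (n+1) y).symm

private lemma nsmul_eq_iter {v : Q} (hv : inMoufangCenter v) (n : ℕ) :
    nsmulL n v = (v + ·)^[n] 0 := by
  rw [← nsmul_key hv n 0, addz]

private lemma nsmul_addL {v : Q} (hv : inMoufangCenter v) (n m : ℕ) :
    nsmulL n v + nsmulL m v = nsmulL (n + m) v := by
  rw [nsmul_key hv, nsmul_eq_iter hv, nsmul_eq_iter hv, ← Function.iterate_add_apply]

private lemma iter_cancel {v : Q} (hv : inMoufangCenter v) :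
    ∀ (n : ℕ) (s : Q), ((-v) + ·)^[n] ((v + ·)^[n] s) = s := by
  intro n
  induction n with
  | zero => intro s; rfl
  | succ n ih =>
    intro s
    rw [Function.iterate_succ_apply' (v + ·) n s,
      Function.iterate_succ_apply ((-v) + ·) n]
    show ((-v) + ·)^[n] (-v + (v + (v + ·)^[n] s)) = s
    rw [klip' hv, ih]

private lemma nsmul_negL {v : Q} (hv : inMoufangCenter v) (n : ℕ) :
    -(nsmulL n v) = nsmulL n (-v) := by
  have h : nsmulL n (-v) + nsmulL n v = 0 := by
    rw [nsmul_key (kneg hv), nsmul_eq_iter hv, iter_cancel hv]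
  exact (rcancel (h.trans (negadd (nsmulL n v)).symm)).symm

private lemma iter_pair {v : Q} (hv : inMoufangCenter v) :
    ∀ (n : ℕ) (x y : Q), ((v + ·)^[n] x) + ((v + ·)^[n] y) = (v + ·)^[n + n] (x + y) := by
  intro n
  induction n with
  | zero => intro x y; rfl
  | succ n ih =>
    intro x y
    rw [Function.iterate_succ_apply' (v + ·) n x, Function.iterate_succ_apply' (v + ·) n y]
    have h1 : (v + (v + ·)^[n] x) + (v + (v + ·)^[n] y)
        = (v + v) + ((v + ·)^[n] x + (v + ·)^[n] y) := (hv _ _).symm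
    rw [h1, ih, ksq hv]
    have : n + 1 + (n + 1) = (n + n) + 1 + 1 := by omega
    rw [this, Function.iterate_succ_apply' (v + ·) (n+n+1) (x+y),
      Function.iterate_succ_apply' (v + ·) (n+n) (x+y)]

private lemma nsmul_memL {v : Q} (hv : inMoufangCenter v) (n : ℕ) :
    inMoufangCenter (nsmulL n v) := by
  intro x y
  rw [nsmul_addL hv, nsmul_key hv (n+n), nsmul_key hv n x, nsmul_key hv n y, iter_pair hv]

/- zsmul lemmas -/

private lemma zsmul_negsucc (v : Q) (n : ℕ) :
    zsmulL (Int.negSucc n) v = -(nsmulL (n+1) v) := rfl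

private lemma zsmul_coe (v : Q) (n : ℕ) : zsmulL (n : ℤ) v = nsmulL n v := rfl

private lemma zsmul_mixed {v : Q} (hv : inMoufangCenter v) :
    ∀ (a b : ℕ), nsmulL a v + nsmulL b (-v) = zsmulL ((a : ℤ) - b) v := by
  intro a
  induction a with
  | zero =>
    intro b
    show (0 : Q) + nsmulL b (-v) = zsmulL ((0:ℤ) - b) v
    rw [zadd]
    cases b with
    | zero => rfl
    | succ k =>
      have he : (0 : ℤ) - ((k+1 : ℕ) : ℤ) = Int.negSucc k := by
        rw [Int.negSucc_eq]; push_cast; ring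
      rw [he, zsmul_negsucc, nsmul_negL hv]
  | succ a ih =>
    intro b
    cases b with
    | zero =>
      show nsmulL (a+1) v + (0:Q) = zsmulL ((a+1 : ℕ) : ℤ) v
      rw [addz, zsmul_coe]
    | succ k =>
      have he : ((a+1 : ℕ) : ℤ) - ((k+1 : ℕ) : ℤ) = (a : ℤ) - k := by push_cast; ring
      rw [he, ← ih k]
      rw [nsmul_key hv (a+1), Function.iterate_succ_apply (v + ·) a]
      show (v + ·)^[a] (v + (-v + nsmulL k (-v))) = nsmulL a v + nsmulL k (-v)
      rw [klip0 hv, nsmul_key hv a]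

private lemma zsmul_addL {v : Q} (hv : inMoufangCenter v) (p q : ℤ) :
    zsmulL p v + zsmulL q v = zsmulL (p + q) v := by
  cases p with
  | ofNat m =>
    cases q with
    | ofNat n =>
      show nsmulL m v + nsmulL n v = zsmulL (Int.ofNat m + Int.ofNat n) v
      have he : Int.ofNat m + Int.ofNat n = ((m + n : ℕ) : ℤ) := by
        simp [Int.ofNat_eq_coe]
      rw [nsmul_addL hv, he, zsmul_coe]
    | negSucc n =>
      show nsmulL m v + -(nsmulL (n+1) v) = zsmulL (Int.ofNat m + Int.negSucc n) v
      have he : Int.ofNat m + Int.negSucc n = (m : ℤ) - ((n+1 : ℕ) : ℤ) := by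
        rw [Int.negSucc_eq, Int.ofNat_eq_coe]; push_cast; ring
      rw [nsmul_negL hv, he, zsmul_mixed hv]
  | negSucc m =>
    cases q with
    | ofNat n =>
      show -(nsmulL (m+1) v) + nsmulL n v = zsmulL (Int.negSucc m + Int.ofNat n) v
      have he : Int.negSucc m + Int.ofNat n = (n : ℤ) - ((m+1 : ℕ) : ℤ) := by
        rw [Int.negSucc_eq, Int.ofNat_eq_coe]; push_cast; ring
      rw [nsmul_negL hv, ← kcomm (nsmul_memL hv n) (nsmulL (m+1) (-v)), he, zsmul_mixed hv]
    | negSucc n =>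
      show -(nsmulL (m+1) v) + -(nsmulL (n+1) v) = zsmulL (Int.negSucc m + Int.negSucc n) v
      have he : Int.negSucc m + Int.negSucc n = Int.negSucc (m + n + 1) := by
        rw [Int.negSucc_eq, Int.negSucc_eq, Int.negSucc_eq]; push_cast; ring
      rw [nsmul_negL hv, nsmul_negL hv, nsmul_addL (kneg hv), he, zsmul_negsucc, nsmul_negL hv]
      congr 1
      omega

private lemma zsmul_negL {v : Q} (hv : inMoufangCenter v) (p : ℤ) :
    -(zsmulL p v) = zsmulL (-p) v := by
  cases p with
  | ofNat m =>
    cases m with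
    | zero =>
      show -(0 : Q) = zsmulL (-(Int.ofNat 0)) v
      rw [negz]; rfl
    | succ k =>
      show -(nsmulL (k+1) v) = zsmulL (-(Int.ofNat (k+1))) v
      have he : -(Int.ofNat (k+1)) = Int.negSucc k := by
        rw [Int.negSucc_eq, Int.ofNat_eq_coe]; push_cast; ring
      rw [he, zsmul_negsucc]
  | negSucc m =>
    show -(-(nsmulL (m+1) v)) = zsmulL (-(Int.negSucc m)) v
    have he : -(Int.negSucc m) = ((m+1 : ℕ) : ℤ) := by
      rw [Int.negSucc_eq]; push_cast; ring
    rw [negneg, he, zsmul_coe]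

private lemma zsmul_memL {v : Q} (hv : inMoufangCenter v) (p : ℤ) :
    inMoufangCenter (zsmulL p v) := by
  cases p with
  | ofNat m => exact nsmul_memL hv m
  | negSucc m =>
    rw [zsmul_negsucc, nsmul_negL hv]
    exact nsmul_memL (kneg hv) (m+1)

private lemma zsmul_oneL {v : Q} : zsmulL 1 v = v := by
  show v + (0 : Q) = v
  exact addz v
/- Sums of "power of v plus central" elements. -/

private lemma pc_add {P R w w' : Q} (hw : inCenter w) (hw' : inCenter w') :
    (P + w) + (R + w') = (P + R) + (w + w') := by
  calc (P + w) + (R + w') = P + (w + (R + w')) := nuc2 hw.1 _ _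
    _ = P + ((w + R) + w') := by rw [nuc1 hw.1 R w']
    _ = P + ((R + w) + w') := by rw [cen_comm hw R]
    _ = P + (R + (w + w')) := by rw [nuc2 hw.1 R w']
    _ = (P + R) + (w + w') := (nuc3 (cen_add hw hw').1 P R).symm

private lemma pc_neg {P w : Q} (hw : inCenter w) : -(P + w) = -P + -w := by
  refine (eq_neg_of_add_right ?_).symm
  calc (P + w) + (-P + -w) = P + (w + (-P + -w)) := nuc2 hw.1 _ _
    _ = P + ((w + -P) + -w) := by rw [nuc1 hw.1 (-P) (-w)]
    _ = P + ((-P + w) + -w) := by rw [cen_comm hw (-P)]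
    _ = P + (-P + (w + -w)) := by rw [nuc2 hw.1 (-P) (-w)]
    _ = P + (-P + 0) := by rw [addneg w]
    _ = P + -P := by rw [addz]
    _ = 0 := addneg P

/- The core commutative-Moufang computation. -/
private lemma crux {v a b c : Q} (hv : inMoufangCenter v) (ha : inMoufangCenter a)
    {m1 m2 : ℤ} (hw1 : inCenterOfK (zsmulL m1 v + b)) (hw2 : inCenterOfK (zsmulL m2 v + a))
    (h0 : b + (a + c) = 0) :
    ((v + a) + (b + c) = v) ∧ ((v + b) + (a + c) = v) := by
  set w1 := zsmulL m1 v + b with hw1d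
  set w2 := zsmulL m2 v + a with hw2d
  have cw1 : inCenter w1 := centerK_to_center hw1
  have cw2 : inCenter w2 := centerK_to_center hw2
  have ha2 : a = zsmulL (-m2) v + w2 := by
    have h := (klip' (zsmul_memL hv m2) a).symm
    rw [zsmul_negL hv m2] at h
    exact h
  have hb2 : b = zsmulL (-m1) v + w1 := by
    have h := (klip' (zsmul_memL hv m1) b).symm
    rw [zsmul_negL hv m1] at h
    exact h
  have hac : a + c = -b := lcancel (h0.trans (addneg b).symm)
  have hcc : c = -a + -b := lcancel (hac.trans (klip0 ha (-b)).symm)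
  have hna : -a = zsmulL m2 v + -w2 := by
    rw [ha2, pc_neg cw2, zsmul_negL hv, neg_neg]
  have hnb : -b = zsmulL m1 v + -w1 := by
    rw [hb2, pc_neg cw1, zsmul_negL hv, neg_neg]
  have hcform : c = zsmulL (m2 + m1) v + (-w2 + -w1) := by
    rw [hcc, hna, hnb, pc_add (cen_neg cw2) (cen_neg cw1), zsmul_addL hv]
  have hbc : b + c = zsmulL (-m1 + (m2 + m1)) v + (w1 + (-w2 + -w1)) := by
    rw [hcform]
    nth_rewrite 1 [hb2]
    rw [pc_add cw1 (cen_add (cen_neg cw2) (cen_neg cw1)), zsmul_addL hv]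
  have hva : v + a = zsmulL (1 + -m2) v + w2 := by
    rw [ha2]
    calc v + (zsmulL (-m2) v + w2) = (v + zsmulL (-m2) v) + w2 := (nuc3 cw2.1 v _).symm
      _ = (zsmulL 1 v + zsmulL (-m2) v) + w2 := by rw [zsmul_oneL]
      _ = zsmulL (1 + -m2) v + w2 := by rw [zsmul_addL hv]
  have hvb : v + b = zsmulL (1 + -m1) v + w1 := by
    rw [hb2]
    calc v + (zsmulL (-m1) v + w1) = (v + zsmulL (-m1) v) + w1 := (nuc3 cw1.1 v _).symm
      _ = (zsmulL 1 v + zsmulL (-m1) v) + w1 := by rw [zsmul_oneL]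
      _ = zsmulL (1 + -m1) v + w1 := by rw [zsmul_addL hv]
  constructor
  · rw [hva, hbc, pc_add cw2 (cen_add cw1 (cen_add (cen_neg cw2) (cen_neg cw1))),
      zsmul_addL hv]
    have he : (1 + -m2) + (-m1 + (m2 + m1)) = 1 := by ring
    rw [he, zsmul_oneL]
    have h1 : w1 + (-w2 + -w1) = -w2 := by
      calc w1 + (-w2 + -w1) = (w1 + -w2) + -w1 := (nuc1 cw1.1 _ _).symm
        _ = (-w2 + w1) + -w1 := by rw [cen_comm cw1 (-w2)]
        _ = -w2 + (w1 + -w1) := nuc2 cw1.1 _ _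
        _ = -w2 := by rw [addneg, addz]
    rw [h1, addneg, addz]
  · rw [hac, hvb, hnb, pc_add cw1 (cen_neg cw1), zsmul_addL hv]
    have he : (1 + -m1) + m1 = 1 := by ring
    rw [he, zsmul_oneL, addneg, addz]

/- Reassembly of nucleus and central parts. -/
private lemma outer {u v p q r a b c : Q} (hu : inNucleus u)
    (hp : inCenter p) (hq : inCenter q) (hr : inCenter r)
    (H1 : (v + a) + (b + c) = v) (H2 : q + (p + r) = 0) :
    ((u + v) + (p + a)) + ((q + b) + (r + c)) = u + v := by
  have stepA : (u + v) + (p + a) = (u + (v + a)) + p := by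
    calc (u + v) + (p + a) = ((u + v) + p) + a := (nuc2 hp.1 (u + v) a).symm
      _ = (p + (u + v)) + a := by rw [← cen_comm hp (u + v)]
      _ = p + ((u + v) + a) := nuc1 hp.1 _ _
      _ = ((u + v) + a) + p := cen_comm hp _
      _ = (u + (v + a)) + p := by rw [nuc1 hu v a]
  have stepB : (q + b) + (r + c) = (b + c) + (q + r) := by
    calc (q + b) + (r + c) = q + (b + (r + c)) := nuc1 hq.1 _ _
      _ = q + (b + (c + r)) := by rw [cen_comm hr c]
      _ = q + ((b + c) + r) := by rw [nuc3 hr.1 b c]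
      _ = ((b + c) + r) + q := cen_comm hq _
      _ = (b + c) + (r + q) := nuc3 hq.1 _ _
      _ = (b + c) + (q + r) := by rw [cen_comm hr q]
  have Hpqr : p + (q + r) = 0 := by
    calc p + (q + r) = (p + q) + r := (nuc3 hr.1 p q).symm
      _ = (q + p) + r := by rw [cen_comm hp q]
      _ = q + (p + r) := nuc1 hq.1 p r
      _ = 0 := H2
  calc ((u + v) + (p + a)) + ((q + b) + (r + c))
      = ((u + (v + a)) + p) + ((b + c) + (q + r)) := by rw [stepA, stepB]
    _ = (u + (v + a)) + (p + ((b + c) + (q + r))) := nuc2 hp.1 _ _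
    _ = (u + (v + a)) + ((p + (b + c)) + (q + r)) := by rw [nuc1 hp.1 (b + c) (q + r)]
    _ = (u + (v + a)) + (((b + c) + p) + (q + r)) := by rw [← cen_comm hp (b + c)]
    _ = (u + (v + a)) + ((b + c) + (p + (q + r))) := by rw [nuc2 hp.1 (b + c) (q + r)]
    _ = (u + (v + a)) + ((b + c) + 0) := by rw [Hpqr]
    _ = (u + (v + a)) + (b + c) := by rw [addz]
    _ = u + ((v + a) + (b + c)) := nuc1 hu _ _
    _ = u + v := by rw [H1]

private lemma central_rot {p q r : Q} (hp : inCenter p) (hq : inCenter q)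
    (hr : inCenter r) (H : q + (p + r) = 0) : p + (q + r) = 0 := by
  calc p + (q + r) = (p + q) + r := (nuc3 hr.1 p q).symm
    _ = (q + p) + r := by rw [cen_comm hp q]
    _ = q + (p + r) := nuc1 hq.1 p r
    _ = 0 := H

end Proof

theorem special_to_aut {Q : Type u} [NKLoop Q] (φ μ : Q → Q)
    (hφ : IsSpecial φ) (hμ : IsSpecial μ)
    (hNφ : ∀ z : Q, inNucleus ((z + z) + φ z))
    (hNμ : ∀ z : Q, inNucleus ((z + z) + μ z))
    (hcomm : φ ∘ μ = μ ∘ φ)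
    (hann : ∀ x : Q, φ x + (μ x + φ (μ x)) = 0)
    (f h : Q → Q) (hf : ∀ z : Q, f z = z + φ z) (hh : ∀ z : Q, h z = z + μ z) :
    f ∘ h = id ∧ h ∘ f = id := by
  obtain ⟨hφe, hφK, ⟨mφ, hqφ⟩, hφN⟩ := hφ
  obtain ⟨hμe, hμK, ⟨mμ, hqμ⟩, hμN⟩ := hμ
  constructor
  · funext z
    show f (h z) = z
    obtain ⟨u, v, hu, hvK, hz1, -⟩ := NKLoop.nk_decomp z
    have hp : inCenter (μ u) := ⟨hμN u hu, hμK u⟩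
    have hq : inCenter (φ u) := ⟨hφN u hu, hφK u⟩
    have hr : inCenter (φ (μ u)) := ⟨hφN (μ u) (hμN u hu), hφK (μ u)⟩
    have cr := crux hvK (hμK v) (hqφ v hvK) (hqμ v hvK) (hann v)
    calc f (h z)
        = ((u + v) + (μ u + μ v)) + ((φ u + φ v) + (φ (μ u) + φ (μ v))) := by
          rw [hh z, hf (z + μ z), hφe z (μ z), hz1, hμe u v, hφe u v, hφe (μ u) (μ v)]
      _ = u + v := outer hu hp hq hr cr.1 (hann u)
      _ = z := hz1.symm
  · funext z
    show h (f z) = z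
    obtain ⟨u, v, hu, hvK, hz1, -⟩ := NKLoop.nk_decomp z
    have hp : inCenter (μ u) := ⟨hμN u hu, hμK u⟩
    have hq : inCenter (φ u) := ⟨hφN u hu, hφK u⟩
    have hr : inCenter (φ (μ u)) := ⟨hφN (μ u) (hμN u hu), hφK (μ u)⟩
    have cr := crux hvK (hμK v) (hqφ v hvK) (hqμ v hvK) (hann v)
    have hc1 : μ (φ u) = φ (μ u) := congrFun hcomm.symm u
    have hc2 : μ (φ v) = φ (μ v) := congrFun hcomm.symm v
    calc h (f z)
        = ((u + v) + (φ u + φ v)) + ((μ u + μ v) + (μ (φ u) + μ (φ v))) := by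
          rw [hf z, hh (z + φ z), hμe z (φ z), hz1, hφe u v, hμe u v, hμe (φ u) (φ v)]
      _ = ((u + v) + (φ u + φ v)) + ((μ u + μ v) + (φ (μ u) + φ (μ v))) := by
          rw [hc1, hc2]
      _ = u + v := outer hu hq hp hr cr.2 (central_rot hp hq hr (hann u))
      _ = z := hz1.symm
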